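/- For the hard-core model on a complete K-partite graph with components of sizes L_1,…,L_K, the configurations σ_1,…,σ_K (component k fully occupied, all else empty) are exactly the local minima of H, and for k1 ≠ k2: Γ(σ_{k1}, {σ_{k2}}) = L_{k1} and Γ̃(X ∖ {σ_{k2}}) = L_* where L_* = max_{k ≠ k2} L_k. -/

import Mathlib

/- Generic energy landscape definitions. -/

variable {X : Type*}

/-- A path: a nonempty sequence of states with consecutive states connected by `q`. -/
def IsPath (q : X → X → Prop) (ω : List X) (x y : X) : Prop :=
  ω ≠ [] ∧ ω.Chain' q ∧ ω.head? = some x ∧ ω.getLast? = some y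

/-- The elevation of a path: the maximal energy along it. -/
noncomputable def elev (H : X → ℝ) (ω : List X) : ℝ :=
  sSup (H '' {z | z ∈ ω})

/-- The communication energy between two states. -/
noncomputable def commE (H : X → ℝ) (q : X → X → Prop) (x y : X) : ℝ :=
  sInf {e | ∃ ω, IsPath q ω x y ∧ elev H ω = e}

/-- The communication energy between two sets of states. -/
noncomputable def commSet (H : X → ℝ) (q : X → X → Prop) (A B : Set X) : ℝ :=
  sInf {e | ∃ x ∈ A, ∃ y ∈ B, commE H q x y = e}

/-- The communication energy between a state and a set of states. -/
noncomputable def commA (H : X → ℝ) (q : X → X → Prop) (x : X) (A : Set X) : ℝ :=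
  sInf {e | ∃ y ∈ A, commE H q x y = e}

/-- A set of states is connected if any two of its states are joined by a path inside it. -/
def SetConn (q : X → X → Prop) (C : Set X) : Prop :=
  ∀ x ∈ C, ∀ y ∈ C, ∃ ω, IsPath q ω x y ∧ ∀ z ∈ ω, z ∈ C

/-- The external boundary of a set of states. -/
def extBdry (q : X → X → Prop) (C : Set X) : Set X :=
  {y | y ∉ C ∧ ∃ x ∈ C, q x y}

/-- A non-trivial cycle. -/
def IsNontrivialCycle (H : X → ℝ) (q : X → X → Prop) (C : Set X) : Prop :=
  C.Nonempty ∧ SetConn q C ∧ sSup (H '' C) < sInf (H '' extBdry q C)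

/-- A cycle: a singleton, or a non-trivial cycle. -/
def IsCycle (H : X → ℝ) (q : X → X → Prop) (C : Set X) : Prop :=
  (∃ x, C = {x}) ∨ IsNontrivialCycle H q C

/-- `C` is a maximal cycle contained in `B`. -/
def MaxCycleIn (H : X → ℝ) (q : X → X → Prop) (B C : Set X) : Prop :=
  IsCycle H q C ∧ C ⊆ B ∧ ∀ C', IsCycle H q C' → C' ⊆ B → C ⊆ C' → C' = C

/-- The depth of a cycle, `Γ(C) = Φ(C, X∖C) − min_{x∈C} H(x)`. -/
noncomputable def depth (H : X → ℝ) (q : X → X → Prop) (C : Set X) : ℝ :=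
  commSet H q C Cᶜ - sInf (H '' C)

/-- The maximum depth of a set: the maximum depth of a maximal cycle contained in it. -/
noncomputable def maxDepth (H : X → ℝ) (q : X → X → Prop) (B : Set X) : ℝ :=
  sSup {d | ∃ C, MaxCycleIn H q B C ∧ depth H q C = d}


/-- The initial cycle `C_A(x) = {x} ∪ {z : Φ(x,z) < Φ(x,A)}`. -/
def initCycle (H : X → ℝ) (q : X → X → Prop) (A : Set X) (x : X) : Set X :=
  {x} ∪ {z | commE H q x z < commA H q x A}

/-- `Γ(x,A)`: the depth of the initial cycle, `Φ(x,A) − min_{z∈C_A(x)} H(z)`. -/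
noncomputable def gammaInit (H : X → ℝ) (q : X → X → Prop) (A : Set X) (x : X) : ℝ :=
  commA H q x A - sInf (H '' initCycle H q A x)

/- The hard-core model on a complete `K`-partite graph with parts `B_k` of size `L k`. -/

/-- Vertices: the disjoint union of the parts; two vertices are adjacent iff they
lie in different parts, so independence means all occupied sites share one part. -/
def IsIndepKP (K : ℕ) (L : Fin K → ℕ) (σ : Finset (Σ k : Fin K, Fin (L k))) : Prop :=
  ∀ v ∈ σ, ∀ w ∈ σ, v.1 = w.1

/-- The state space: independent sets of the complete `K`-partite graph. -/
def ConfigKP (K : ℕ) (L : Fin K → ℕ) := {σ : Finset (Σ k : Fin K, Fin (L k)) // IsIndepKP K L σ}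

/-- Single-site update connectivity on configurations. -/
def qKP (K : ℕ) (L : Fin K → ℕ) (σ τ : ConfigKP K L) : Prop :=
  ((σ.1 \ τ.1) ∪ (τ.1 \ σ.1)).card = 1

/-- The energy `H(σ) = −|σ|`. -/
noncomputable def HKP (K : ℕ) (L : Fin K → ℕ) (σ : ConfigKP K L) : ℝ := -(σ.1.card : ℝ)

/-! The nonempty configurations inside part `k` form a well `onPart k`: every single-site
update leaving it lands on the empty configuration, the global maximum `0` of `H`, and its
bottom is `σ_k = full k` at energy `-L k`. Hence `Φ(σ_{k1}, σ_{k2}) = 0`, the initial cycle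
of `σ_{k1}` is the well of part `k1`, of depth `L k1`. A nontrivial cycle avoiding `σ_{k2}`
cannot contain the global maximum, so it stays in one well, and since it contains a local
minimum `σ_k` that well has `k ≠ k2`. The maximal cycles in `X ∖ {σ_{k2}}` are therefore the
wells `k ≠ k2`, of depth `L k`, and singletons that are not local minima, of depth `≤ 0`. -/

def IsLocalMinimum (H : X → ℝ) (q : X → X → Prop) (x : X) : Prop :=
  ∀ y, q x y → H x ≤ H y

section Landscape

variable {q : X → X → Prop} {H : X → ℝ} {ω ω₁ ω₂ : List X} {x y z a b : X} {c : ℝ}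
  {A B C S : Set X}

theorem isPath_singleton (q : X → X → Prop) (x : X) : IsPath q [x] x x :=
  ⟨List.cons_ne_nil _ _, List.isChain_singleton _, rfl, rfl⟩

theorem isPath_pair (h : q x y) : IsPath q [x, y] x y :=
  ⟨List.cons_ne_nil _ _, List.isChain_pair.mpr h, rfl, rfl⟩

theorem IsPath.cons (h : q x y) (hp : IsPath q ω y z) : IsPath q (x :: ω) x z := by
  obtain ⟨hne, hchain, hhead, hlast⟩ := hp
  refine ⟨List.cons_ne_nil _ _, List.isChain_cons.mpr ⟨?_, hchain⟩, rfl, ?_⟩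
  · simpa [hhead] using h
  · simp [List.getLast?_cons, hlast]

theorem IsPath.mem_head (hp : IsPath q ω x y) : x ∈ ω :=
  List.mem_of_mem_head? hp.2.2.1

theorem IsPath.reverse (hq : ∀ ⦃a b⦄, q a b → q b a) (hp : IsPath q ω x y) :
    IsPath q ω.reverse y x := by
  obtain ⟨hne, hchain, hhead, hlast⟩ := hp
  refine ⟨by simpa using hne, ?_, by rwa [List.head?_reverse], by rwa [List.getLast?_reverse]⟩
  exact List.isChain_reverse.mpr (List.IsChain.imp (fun _ _ h => hq h) hchain)

theorem IsPath.append_tail (h₁ : IsPath q ω₁ x y) (h₂ : IsPath q ω₂ y z) :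
    IsPath q (ω₁ ++ ω₂.tail) x z := by
  obtain ⟨hne₁, hchain₁, hhead₁, hlast₁⟩ := h₁
  obtain ⟨hne₂, hchain₂, hhead₂, hlast₂⟩ := h₂
  obtain ⟨t, rfl⟩ : ∃ t, ω₂ = y :: t := by
    cases ω₂ with
    | nil => exact absurd rfl hne₂
    | cons a t => exact ⟨t, by simp_all⟩
  refine ⟨by simp [hne₁], List.isChain_append.mpr ⟨hchain₁, hchain₂.tail, ?_⟩, ?_, ?_⟩
  · simp only [hlast₁, Option.mem_def, Option.some.injEq, forall_eq']
    exact fun b hb => List.isChain_cons.mp hchain₂ |>.1 b hb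
  · rwa [List.head?_append_of_ne_nil _ hne₁]
  · cases t with
    | nil =>
      obtain rfl : y = z := by simpa using hlast₂
      simpa using hlast₁
    | cons b t => rwa [List.tail_cons, List.getLast?_append_of_ne_nil _ (List.cons_ne_nil _ _)]

theorem IsPath.exists_adj_mem_notMem (hp : IsPath q ω x y) (hx : x ∈ S) (hy : y ∉ S) :
    ∃ a ∈ S, ∃ b ∉ S, b ∈ ω ∧ q a b := by
  by_contra! h
  obtain ⟨hne, hchain, hhead, hlast⟩ := hp
  refine hy <| List.IsChain.induction (· ∈ S) ω (List.IsChain.iff_mem.mp hchain) ?_ ?_ y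
    (List.mem_of_mem_getLast? hlast)
  · rintro a b ⟨-, hb, hab⟩ ha
    by_contra hbS
    exact h a ha b hbS hb hab
  · intro hne'
    rw [List.head?_eq_some_head hne', Option.some_inj] at hhead
    rwa [hhead]

theorem le_elev (hz : z ∈ ω) : H z ≤ elev H ω :=
  le_csSup (ω.finite_toSet.image H).bddAbove ⟨z, hz, rfl⟩

theorem elev_le (hne : ω ≠ []) (h : ∀ w ∈ ω, H w ≤ c) : elev H ω ≤ c := by
  obtain ⟨a, ha⟩ := List.exists_mem_of_ne_nil ω hne
  exact csSup_le ⟨H a, a, ha, rfl⟩ (by rintro _ ⟨w, hw, rfl⟩; exact h w hw)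

theorem le_elev_of_forall_adj (hS : ∀ a ∈ S, ∀ b ∉ S, q a b → c ≤ H b)
    (hp : IsPath q ω x y) (hx : x ∈ S) (hy : y ∉ S) : c ≤ elev H ω := by
  obtain ⟨a, ha, b, hb, hbω, hab⟩ := hp.exists_adj_mem_notMem hx hy
  exact (hS a ha b hb hab).trans (le_elev hbω)

theorem commE_le_elev (hp : IsPath q ω x y) : commE H q x y ≤ elev H ω := by
  refine csInf_le ⟨H x, ?_⟩ ⟨ω, hp, rfl⟩
  rintro _ ⟨ω', hp', rfl⟩
  exact le_elev hp'.mem_head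

theorem le_commE (hconn : ∃ ω, IsPath q ω x y) (h : ∀ ω, IsPath q ω x y → c ≤ elev H ω) :
    c ≤ commE H q x y := by
  obtain ⟨ω, hp⟩ := hconn
  exact le_csInf ⟨_, ω, hp, rfl⟩ (by rintro _ ⟨ω', hp', rfl⟩; exact h ω' hp')

theorem commA_singleton : commA H q x {y} = commE H q x y := by
  simp [commA]

theorem SetConn.subset_of_forall_adj (hC : SetConn q C) (hx : x ∈ C) (hxS : x ∈ S)
    (hS : ∀ a ∈ S, ∀ b ∉ S, q a b → b ∉ C) : C ⊆ S := by
  intro y hy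
  by_contra hyS
  obtain ⟨ω, hp, hω⟩ := hC x hx y hy
  obtain ⟨a, ha, b, hb, hbω, hab⟩ := hp.exists_adj_mem_notMem hxS hyS
  exact hS a ha b hb hab (hω b hbω)

section Finite

variable [Finite X]

theorem commSet_le (hx : x ∈ A) (hy : y ∈ B) : commSet H q A B ≤ commE H q x y := by
  refine csInf_le (((Set.finite_range fun p : X × X => commE H q p.1 p.2).subset ?_).bddBelow)
    ⟨x, hx, y, hy, rfl⟩
  rintro _ ⟨x', -, y', -, rfl⟩
  exact ⟨(x', y'), rfl⟩

theorem depth_singleton_nonpos (h : ¬ IsLocalMinimum H q x) : depth H q {x} ≤ 0 := by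
  obtain ⟨y, hxy, hlt⟩ : ∃ y, q x y ∧ H y < H x := by simpa [IsLocalMinimum] using h
  have hΦ : commSet H q {x} {x}ᶜ ≤ H x := calc
    _ ≤ commE H q x y :=
      commSet_le (Set.mem_singleton x) (Set.mem_compl_singleton_iff.mpr fun h => hlt.ne (h ▸ rfl))
    _ ≤ elev H [x, y] := commE_le_elev (isPath_pair hxy)
    _ ≤ H x := elev_le (List.cons_ne_nil _ _) (by simp [hlt.le])
  simpa [depth] using hΦ

theorem IsNontrivialCycle.mem_of_adj (hC : IsNontrivialCycle H q C) (hx : x ∈ C) (ha : a ∈ C)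
    (hab : q a b) (hb : H b ≤ H x) : b ∈ C := by
  by_contra hbC
  have hsup : H x ≤ sSup (H '' C) := le_csSup (Set.toFinite _).bddAbove ⟨x, hx, rfl⟩
  have hinf : sInf (H '' extBdry q C) ≤ H b :=
    csInf_le (Set.toFinite _).bddBelow ⟨b, ⟨hbC, a, ha, hab⟩, rfl⟩
  linarith [hC.2.2]

theorem IsNontrivialCycle.exists_isLocalMinimum (hC : IsNontrivialCycle H q C) :
    ∃ z ∈ C, IsLocalMinimum H q z := by
  obtain ⟨z, hz, hmin⟩ := Set.exists_min_image C H C.toFinite hC.1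
  refine ⟨z, hz, fun y hzy => ?_⟩
  by_contra! hlt
  exact (hmin y (hC.mem_of_adj hz hz hzy hlt.le)).not_gt hlt

theorem IsNontrivialCycle.mem_of_isPath_of_forall_le (hC : IsNontrivialCycle H q C)
    (hx : x ∈ C) (hmax : ∀ z, H z ≤ H x) (hp : IsPath q ω x y) : y ∈ C := by
  by_contra hy
  obtain ⟨a, ha, b, hb, -, hab⟩ := hp.exists_adj_mem_notMem hx hy
  exact hb (hC.mem_of_adj hx ha hab (hmax b))

end Finite

end Landscape

namespace ConfigKP

variable {K : ℕ} {L : Fin K → ℕ} {σ τ z : ConfigKP K L} {k k' : Fin K}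
  {v : Σ k : Fin K, Fin (L k)}

instance : Finite (ConfigKP K L) :=
  inferInstanceAs (Finite {σ : Finset (Σ k : Fin K, Fin (L k)) // IsIndepKP K L σ})

@[ext] theorem ext (h : σ.1 = τ.1) : σ = τ := Subtype.ext h

def empty : ConfigKP K L := ⟨∅, by simp [IsIndepKP]⟩

def full (k : Fin K) : ConfigKP K L :=
  ⟨Finset.univ.filter (fun v : Σ k : Fin K, Fin (L k) => v.1 = k), by
    simp +contextual [IsIndepKP]⟩

def onPart (k : Fin K) : Set (ConfigKP K L) := {σ | σ.1.Nonempty ∧ ∀ v ∈ σ.1, v.1 = k}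

theorem mem_full : v ∈ (full k : ConfigKP K L).1 ↔ v.1 = k := by
  simp [full]

theorem card_full (k : Fin K) : (full k : ConfigKP K L).1.card = L k := by
  rw [full, Finset.card_filter, Fintype.sum_sigma]
  simp [apply_ite Finset.card]

theorem subset_full (h : ∀ v ∈ σ.1, v.1 = k) : σ.1 ⊆ (full k).1 :=
  fun v hv => mem_full.mpr (h v hv)

theorem eq_empty_or_mem_onPart (σ : ConfigKP K L) : σ = empty ∨ ∃ k, σ ∈ onPart k := by
  rcases σ.1.eq_empty_or_nonempty with h | ⟨v, hv⟩
  · exact Or.inl (ext h)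
  · exact Or.inr ⟨v.1, ⟨v, hv⟩, fun w hw => σ.2 w hw v hv⟩

theorem empty_notMem_onPart (k : Fin K) : (empty : ConfigKP K L) ∉ onPart k :=
  fun ⟨⟨v, hv⟩, _⟩ => by simp [empty] at hv

theorem full_mem_onPart (hk : 0 < L k) : (full k : ConfigKP K L) ∈ onPart k :=
  ⟨⟨⟨k, ⟨0, hk⟩⟩, mem_full.mpr rfl⟩, fun _ => mem_full.mp⟩

theorem full_notMem_onPart (h : k ≠ k') : (full k' : ConfigKP K L) ∉ onPart k :=
  fun ⟨⟨v, hv⟩, hall⟩ => h ((hall v hv).symm.trans (mem_full.mp hv))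

theorem mem_onPart_of_subset (hz : z ∈ onPart k) (hzσ : z.1 ⊆ σ.1) (hσ : σ.1 ⊆ (full k).1) :
    σ ∈ onPart k :=
  ⟨hz.1.mono hzσ, fun _ hv => mem_full.mp (hσ hv)⟩

theorem HKP_nonpos (σ : ConfigKP K L) : HKP K L σ ≤ 0 := by
  simp [HKP]

theorem HKP_empty : HKP K L empty = 0 := by
  simp [HKP, empty]

theorem HKP_full (k : Fin K) : HKP K L (full k) = -L k := by
  simp [HKP, card_full]

theorem HKP_le_neg_one (hσ : σ ∈ onPart k) : HKP K L σ ≤ -1 := by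
  have : (1 : ℝ) ≤ σ.1.card := by exact_mod_cast Finset.card_pos.mpr hσ.1
  simp only [HKP]
  linarith

theorem HKP_full_le (hσ : σ ∈ onPart k) : HKP K L (full k) ≤ HKP K L σ := by
  simp only [HKP, neg_le_neg_iff, Nat.cast_le]
  exact Finset.card_le_card (subset_full hσ.2)

theorem qKP_symm : ∀ ⦃σ τ : ConfigKP K L⦄, qKP K L σ τ → qKP K L τ σ := by
  intro σ τ h
  rwa [qKP, Finset.union_comm]

theorem qKP_cases (h : qKP K L σ τ) :
    (σ.1 ⊆ τ.1 ∧ τ.1.card = σ.1.card + 1) ∨ (τ.1 ⊆ σ.1 ∧ σ.1.card = τ.1.card + 1) := by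
  rw [qKP, Finset.card_union_of_disjoint disjoint_sdiff_sdiff] at h
  rcases Nat.add_eq_one_iff.mp h with ⟨h₁, h₂⟩ | ⟨h₁, h₂⟩
  · have hsub : σ.1 ⊆ τ.1 := Finset.sdiff_eq_empty_iff_subset.mp (Finset.card_eq_zero.mp h₁)
    have := Finset.card_sdiff_add_card_eq_card hsub
    exact Or.inl ⟨hsub, by omega⟩
  · have hsub : τ.1 ⊆ σ.1 := Finset.sdiff_eq_empty_iff_subset.mp (Finset.card_eq_zero.mp h₂)
    have := Finset.card_sdiff_add_card_eq_card hsub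
    exact Or.inr ⟨hsub, by omega⟩

theorem qKP_of_eq_insert (hv : v ∉ σ.1) (h : τ.1 = insert v σ.1) : qKP K L σ τ := by
  rw [qKP, h, Finset.sdiff_eq_empty_iff_subset.mpr (Finset.subset_insert _ _),
    Finset.insert_sdiff_of_notMem _ hv, Finset.sdiff_self]
  simp

theorem eq_empty_of_qKP (hσ : σ ∈ onPart k) (h : qKP K L σ τ) (hτ : τ ∉ onPart k) :
    τ = empty := by
  obtain ⟨⟨v, hv⟩, hall⟩ := hσ
  rcases qKP_cases h with ⟨hsub, -⟩ | ⟨hsub, -⟩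
  · refine absurd ⟨⟨v, hsub hv⟩, fun w hw => ?_⟩ hτ
    rw [τ.2 w hw v (hsub hv), hall v hv]
  · rcases τ.1.eq_empty_or_nonempty with he | hne
    · exact ext he
    · exact absurd ⟨hne, fun u hu => hall u (hsub hu)⟩ hτ

theorem not_isLocalMinimum_of_notMem (hv : v ∉ σ.1) (hσ : ∀ w ∈ σ.1, w.1 = v.1) :
    ¬ IsLocalMinimum (HKP K L) (qKP K L) σ := by
  have hind : IsIndepKP K L (insert v σ.1) := by
    simp only [IsIndepKP, Finset.mem_insert]
    rintro a (rfl | ha) b (rfl | hb) <;> simp [*]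
  intro hmin
  have := hmin ⟨insert v σ.1, hind⟩ (qKP_of_eq_insert hv rfl)
  simp only [HKP, Finset.card_insert_of_notMem hv] at this
  push_cast at this
  linarith

theorem isLocalMinimum_full (hk : 0 < L k) : IsLocalMinimum (HKP K L) (qKP K L) (full k) := by
  intro τ h
  rcases qKP_cases h with ⟨hsub, hcard⟩ | ⟨-, hcard⟩
  · have hv : ⟨k, ⟨0, hk⟩⟩ ∈ τ.1 := hsub (mem_full.mpr rfl)
    have := Finset.card_le_card (subset_full (k := k) fun w hw => τ.2 w hw _ hv)
    rw [card_full] at this hcard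
    omega
  · simp only [HKP, hcard]
    push_cast
    linarith

theorem eq_full_of_isLocalMinimum (hk : 0 < L k) (h : IsLocalMinimum (HKP K L) (qKP K L) σ) :
    ∃ k', σ = full k' := by
  rcases eq_empty_or_mem_onPart σ with rfl | ⟨k', hσ⟩
  · exact absurd h (not_isLocalMinimum_of_notMem (v := ⟨k, ⟨0, hk⟩⟩) (by simp [empty])
      (by simp [empty]))
  · refine ⟨k', by_contra fun hne => ?_⟩
    have hssub : σ.1 ⊂ (full k').1 :=
      (subset_full hσ.2).ssubset_of_ne fun heq => hne (ext heq)
    obtain ⟨v, hv, hvσ⟩ := Finset.exists_of_ssubset hssub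
    exact not_isLocalMinimum_of_notMem hvσ (fun w hw => (hσ.2 w hw).trans (mem_full.mp hv).symm) h

theorem exists_isPath_of_subset (h : τ.1 ⊆ σ.1) :
    ∃ ω, IsPath (qKP K L) ω σ τ ∧ ∀ z ∈ ω, τ.1 ⊆ z.1 ∧ z.1 ⊆ σ.1 := by
  obtain ⟨n, hn⟩ : ∃ n, (σ.1 \ τ.1).card = n := ⟨_, rfl⟩
  induction n generalizing σ with
  | zero =>
    obtain rfl : σ = τ :=
      ext (h.antisymm' (Finset.sdiff_eq_empty_iff_subset.mp (Finset.card_eq_zero.mp hn)))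
    exact ⟨[σ], isPath_singleton _ σ, by simp⟩
  | succ n ih =>
    obtain ⟨v, hv⟩ : (σ.1 \ τ.1).Nonempty := Finset.card_pos.mp (by omega)
    rw [Finset.mem_sdiff] at hv
    let σ' : ConfigKP K L := ⟨σ.1.erase v, fun a ha b hb =>
      σ.2 a (Finset.mem_of_mem_erase ha) b (Finset.mem_of_mem_erase hb)⟩
    have hτσ' : τ.1 ⊆ σ'.1 := fun w hw =>
      Finset.mem_erase.mpr ⟨fun hwv => hv.2 (hwv ▸ hw), h hw⟩
    have hn' : (σ'.1 \ τ.1).card = n := by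
      rw [Finset.erase_sdiff_comm, Finset.card_erase_of_mem (Finset.mem_sdiff.mpr hv), hn,
        Nat.add_sub_cancel]
    obtain ⟨ω, hp, hω⟩ := ih hτσ' hn'
    have hσσ' : qKP K L σ σ' :=
      qKP_symm (qKP_of_eq_insert (Finset.notMem_erase v σ.1) (Finset.insert_erase hv.1).symm)
    refine ⟨σ :: ω, hp.cons hσσ', ?_⟩
    rintro z (_ | ⟨_, hz⟩)
    · exact ⟨h, subset_rfl⟩
    · exact ⟨(hω z hz).1, (hω z hz).2.trans (Finset.erase_subset v σ.1)⟩

theorem exists_isPath (σ τ : ConfigKP K L) : ∃ ω, IsPath (qKP K L) ω σ τ := by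
  obtain ⟨ω₁, hp₁, -⟩ := exists_isPath_of_subset (τ := empty) (Finset.empty_subset σ.1)
  obtain ⟨ω₂, hp₂, -⟩ := exists_isPath_of_subset (τ := empty) (Finset.empty_subset τ.1)
  exact ⟨_, hp₁.append_tail (hp₂.reverse qKP_symm)⟩

theorem setConn_onPart (k : Fin K) : SetConn (qKP K L) (onPart k) := by
  intro x hx y hy
  obtain ⟨ω₁, hp₁, hω₁⟩ := exists_isPath_of_subset (subset_full hx.2)
  obtain ⟨ω₂, hp₂, hω₂⟩ := exists_isPath_of_subset (subset_full hy.2)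
  refine ⟨_, (hp₁.reverse qKP_symm).append_tail hp₂, fun z hz => ?_⟩
  rcases List.mem_append.mp hz with hz | hz
  · obtain ⟨hxz, hzk⟩ := hω₁ z (List.mem_reverse.mp hz)
    exact mem_onPart_of_subset hx hxz hzk
  · obtain ⟨hyz, hzk⟩ := hω₂ z (List.mem_of_mem_tail hz)
    exact mem_onPart_of_subset hy hyz hzk

theorem commE_nonpos (σ τ : ConfigKP K L) : commE (HKP K L) (qKP K L) σ τ ≤ 0 := by
  obtain ⟨ω, hp⟩ := exists_isPath σ τ
  exact (commE_le_elev hp).trans (elev_le hp.1 fun w _ => HKP_nonpos w)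

theorem commE_eq_zero (hσ : σ ∈ onPart k) (hτ : τ ∉ onPart k) :
    commE (HKP K L) (qKP K L) σ τ = 0 := by
  refine (commE_nonpos σ τ).antisymm (le_commE (exists_isPath σ τ) fun ω hp => ?_)
  refine le_elev_of_forall_adj (fun a ha b hb hab => ?_) hp hσ hτ
  rw [eq_empty_of_qKP ha hab hb, HKP_empty]

theorem commE_full_le (hz : z ∈ onPart k) : commE (HKP K L) (qKP K L) (full k) z ≤ -1 := by
  obtain ⟨ω, hp, hω⟩ := exists_isPath_of_subset (subset_full hz.2)
  refine (commE_le_elev hp).trans (elev_le hp.1 fun w hw => ?_)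
  exact HKP_le_neg_one (mem_onPart_of_subset hz (hω w hw).1 (hω w hw).2)

theorem sInf_HKP_onPart (hk : 0 < L k) : sInf (HKP K L '' onPart k) = -L k := by
  rw [← HKP_full k]
  refine IsLeast.csInf_eq ⟨⟨full k, full_mem_onPart hk, rfl⟩, ?_⟩
  rintro _ ⟨σ, hσ, rfl⟩
  exact HKP_full_le hσ

theorem initCycle_full (hk₁ : 0 < L k) (hk : k ≠ k') :
    initCycle (HKP K L) (qKP K L) {full k'} (full k) = onPart k := by
  have hΦ : commA (HKP K L) (qKP K L) (full k) {full k'} = 0 := by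
    rw [commA_singleton, commE_eq_zero (full_mem_onPart hk₁) (full_notMem_onPart hk)]
  ext z
  rw [initCycle, hΦ]
  constructor
  · rintro (rfl | hz)
    · exact full_mem_onPart hk₁
    · by_contra hzk
      exact hz.ne (commE_eq_zero (full_mem_onPart hk₁) hzk)
  · exact fun hz => Or.inr ((commE_full_le hz).trans_lt (by norm_num))

theorem gammaInit_full (hk₁ : 0 < L k) (hk : k ≠ k') :
    gammaInit (HKP K L) (qKP K L) {full k'} (full k) = L k := by
  rw [gammaInit, initCycle_full hk₁ hk, sInf_HKP_onPart hk₁, commA_singleton,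
    commE_eq_zero (full_mem_onPart hk₁) (full_notMem_onPart hk)]
  ring

theorem isNontrivialCycle_onPart (hk : 0 < L k) :
    IsNontrivialCycle (HKP K L) (qKP K L) (onPart k) := by
  refine ⟨⟨full k, full_mem_onPart hk⟩, setConn_onPart k, ?_⟩
  have hsup : sSup (HKP K L '' onPart k) ≤ -1 :=
    csSup_le ⟨_, full k, full_mem_onPart hk, rfl⟩ <| by
      rintro _ ⟨σ, hσ, rfl⟩
      exact HKP_le_neg_one hσ
  have hinf : 0 ≤ sInf (HKP K L '' extBdry (qKP K L) (onPart k)) := by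
    refine Real.sInf_nonneg ?_
    rintro _ ⟨τ, ⟨hτ, σ, hσ, hστ⟩, rfl⟩
    rw [eq_empty_of_qKP hσ hστ hτ, HKP_empty]
  linarith

/-- A nontrivial cycle containing the global maximum `empty` of `H` contains every state. -/
theorem empty_notMem_of_isNontrivialCycle {C : Set (ConfigKP K L)}
    (hC : IsNontrivialCycle (HKP K L) (qKP K L) C) (hσ : σ ∉ C) : empty ∉ C := fun h =>
  hσ <| hC.mem_of_isPath_of_forall_le h (fun τ => HKP_empty (L := L) ▸ HKP_nonpos τ)
    (exists_isPath empty σ).choose_spec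

theorem subset_onPart_of_isNontrivialCycle {C : Set (ConfigKP K L)}
    (hC : IsNontrivialCycle (HKP K L) (qKP K L) C) (hempty : empty ∉ C) (hσC : σ ∈ C)
    (hσ : σ ∈ onPart k) : C ⊆ onPart k :=
  hC.2.1.subset_of_forall_adj hσC hσ fun _ ha _ hb hab => eq_empty_of_qKP ha hab hb ▸ hempty

theorem maxCycleIn_onPart (hk : 0 < L k) (hkk : k ≠ k') :
    MaxCycleIn (HKP K L) (qKP K L) {σ | σ ≠ full k'} (onPart k) := by
  refine ⟨Or.inr (isNontrivialCycle_onPart hk), fun σ hσ => ?_, fun C hC hCB hsub => ?_⟩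
  · rintro rfl
    exact full_notMem_onPart hkk hσ
  rcases hC with ⟨x, rfl⟩ | hC
  · exact ((Set.Nonempty.subset_singleton_iff ⟨_, full_mem_onPart hk⟩).mp hsub).symm
  · refine Set.Subset.antisymm ?_ hsub
    exact subset_onPart_of_isNontrivialCycle hC
      (empty_notMem_of_isNontrivialCycle hC fun h => hCB h rfl) (hsub (full_mem_onPart hk))
      (full_mem_onPart hk)

theorem eq_onPart_or_eq_singleton_of_maxCycleIn (hL : ∀ k, 0 < L k) {C : Set (ConfigKP K L)}
    (hC : MaxCycleIn (HKP K L) (qKP K L) {σ | σ ≠ full k'} C) :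
    (∃ k ≠ k', C = onPart k) ∨ ∃ x, C = {x} ∧ ¬ IsLocalMinimum (HKP K L) (qKP K L) x := by
  obtain ⟨hcyc, hCB, hmax⟩ := hC
  by_cases hmin : ∃ z ∈ C, IsLocalMinimum (HKP K L) (qKP K L) z
  · obtain ⟨z, hz, hzmin⟩ := hmin
    obtain ⟨k, rfl⟩ := eq_full_of_isLocalMinimum (hL k') hzmin
    have hkk : k ≠ k' := by
      rintro rfl
      exact hCB hz rfl
    have hsub : C ⊆ onPart k := by
      rcases hcyc with ⟨x, rfl⟩ | hcyc
      · exact Set.singleton_subset_iff.mpr (hz ▸ full_mem_onPart (hL k))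
      · exact subset_onPart_of_isNontrivialCycle hcyc
          (empty_notMem_of_isNontrivialCycle hcyc fun h => hCB h rfl) hz (full_mem_onPart (hL k))
    obtain ⟨hcyc', hB', -⟩ := maxCycleIn_onPart (hL k) hkk
    exact Or.inl ⟨k, hkk, (hmax _ hcyc' hB' hsub).symm⟩
  · rcases hcyc with ⟨x, rfl⟩ | hcyc
    · exact Or.inr ⟨x, rfl, fun h => hmin ⟨x, rfl, h⟩⟩
    · exact absurd hcyc.exists_isLocalMinimum hmin

theorem depth_onPart (hk : 0 < L k) : depth (HKP K L) (qKP K L) (onPart k) = L k := by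
  have hΦ : commSet (HKP K L) (qKP K L) (onPart k) (onPart k)ᶜ = 0 := by
    have hvalues : {e | ∃ σ ∈ onPart k, ∃ τ ∈ (onPart k)ᶜ, commE (HKP K L) (qKP K L) σ τ = e} =
        {0} := by
      refine Set.eq_singleton_iff_unique_mem.mpr ⟨?_, ?_⟩
      · exact ⟨full k, full_mem_onPart hk, empty, empty_notMem_onPart k,
          commE_eq_zero (full_mem_onPart hk) (empty_notMem_onPart k)⟩
      · rintro _ ⟨σ, hσ, τ, hτ, rfl⟩
        exact commE_eq_zero hσ hτ
    rw [commSet, hvalues, csInf_singleton]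
  rw [depth, hΦ, sInf_HKP_onPart hk]
  ring

theorem maxDepth_eq (hL : ∀ k, 0 < L k) (hk : k ≠ k') :
    maxDepth (HKP K L) (qKP K L) {σ | σ ≠ full k'} =
      sSup {r : ℝ | ∃ k, k ≠ k' ∧ (L k : ℝ) = r} := by
  refine csSup_eq_csSup_of_forall_exists_le ?_ ?_
  · rintro _ ⟨C, hC, rfl⟩
    rcases eq_onPart_or_eq_singleton_of_maxCycleIn hL hC with ⟨k, hkk, rfl⟩ | ⟨x, rfl, hx⟩
    · exact ⟨L k, ⟨k, hkk, rfl⟩, (depth_onPart (hL k)).le⟩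
    · exact ⟨L k, ⟨k, hk, rfl⟩, (depth_singleton_nonpos hx).trans (Nat.cast_nonneg _)⟩
  · rintro _ ⟨k, hkk, rfl⟩
    exact ⟨_, ⟨onPart k, maxCycleIn_onPart (hL k) hkk, rfl⟩, (depth_onPart (hL k)).ge⟩

end ConfigKP

/-- for the hard-core model on the complete `K`-partite graph, the
configurations `σ_k` (part `k` fully occupied) are exactly the local minima of `H`;
moreover for `k1 ≠ k2`, `Γ(σ_{k1},{σ_{k2}}) = L_{k1}` and
`Γ̃(X ∖ {σ_{k2}}) = L_* = max_{k ≠ k2} L_k`. -/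
theorem complete_partite_landscape (K : ℕ) (L : Fin K → ℕ) (hL : ∀ k, 1 ≤ L k)
    (s : Fin K → ConfigKP K L)
    (hs : ∀ k, (s k).1 =
      Finset.univ.filter (fun v : Σ k : Fin K, Fin (L k) => v.1 = k))
    (k1 k2 : Fin K) (hk : k1 ≠ k2) :
    (∀ σ : ConfigKP K L,
        (∀ τ : ConfigKP K L, qKP K L σ τ → HKP K L σ ≤ HKP K L τ) ↔ ∃ k, σ = s k) ∧
    gammaInit (HKP K L) (qKP K L) {s k2} (s k1) = (L k1 : ℝ) ∧
    maxDepth (HKP K L) (qKP K L) {σ : ConfigKP K L | σ ≠ s k2} =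
      sSup {r : ℝ | ∃ k, k ≠ k2 ∧ (L k : ℝ) = r} := by
  obtain rfl : s = ConfigKP.full := funext fun k => ConfigKP.ext (hs k)
  refine ⟨fun σ => ⟨ConfigKP.eq_full_of_isLocalMinimum (hL k1), ?_⟩,
    ConfigKP.gammaInit_full (hL k1) hk, ConfigKP.maxDepth_eq hL hk⟩
  rintro ⟨k, rfl⟩
  exact ConfigKP.isLocalMinimum_full (hL k)
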